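/- Let d ≥ 1, let p be a Borel probability measure on ℂ that is non-atomic (p({z}) = 0 for every z ∈ ℂ) and whose topological support is all of ℂ, and let P* be the probability measure on the space of sequences of d×d complex matrices (Matrix)^ℕ under which all the entries of all the matrices A_1, A_2, … are independent with common law p (the infinite product over n ∈ ℕ of the d²-fold product measure of p). Then for P*-almost every sequence (A_n)_{n≥1}: P_n ≠ 0 for every n, and the sequence n ↦ P_n/‖P_n‖ does not converge. -/

import Mathlib

open Filter Matrix MeasureTheory ProbabilityTheory

/-- `‖X‖`: sum of the moduli of the entries of a complex matrix. -/
noncomputable def matEntrySumNorm {d : ℕ} (M : Matrix (Fin d) (Fin d) ℂ) : ℝ :=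
  ∑ i, ∑ j, ‖M i j‖

/-- `P_n = A_1 ⋯ A_n` (ordered product). -/
noncomputable def matProd {d : ℕ} (A : ℕ → Matrix (Fin d) (Fin d) ℂ) (n : ℕ) :
    Matrix (Fin d) (Fin d) ℂ :=
  ((List.range n).map fun i => A (i + 1)).prod

/-- The Borel σ-algebra on the space of `d × d` complex matrices. -/
noncomputable instance matrixMeasurableSpace {d : ℕ} : MeasurableSpace (Matrix (Fin d) (Fin d) ℂ) :=
  borel _

instance matrixBorelSpace {d : ℕ} : BorelSpace (Matrix (Fin d) (Fin d) ℂ) :=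
  ⟨rfl⟩

/-!
Almost surely `P_n ≠ 0` for every `n`: if `P_n r k ≠ 0`, then `P_{n+1} r k` is an affine
function of the entry `(A_{n+1}) k k` with nonzero slope `P_n r k`; that entry is independent of
all the other entries and its law has no atoms, so `P_{n+1} r k = 0` has probability zero.

By the second Borel–Cantelli lemma and the full support of `p`, almost surely `i • 1` is a cluster
point of `(A_n)`. Now suppose `P_n / ‖P_n‖ → Q`, so that `‖Q‖ = 1`. Since
`P_n / ‖P_n‖ = N((P_{n-1} / ‖P_{n-1}‖) A_n)` with `N M = M / ‖M‖`, letting `n → ∞` along a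
subsequence on which `A_n → i • 1` gives `Q = N(i Q) = i Q`, hence `Q = 0`, a contradiction.
-/

open Topology

section Matrices

variable {d : ℕ}

lemma matProd_succ (A : ℕ → Matrix (Fin d) (Fin d) ℂ) (n : ℕ) :
    matProd A (n + 1) = matProd A n * A (n + 1) := by
  simp [matProd, List.range_succ]

lemma matProd_congr {A B : ℕ → Matrix (Fin d) (Fin d) ℂ} {n : ℕ}
    (h : ∀ m, 1 ≤ m → m ≤ n → A m = B m) : matProd A n = matProd B n := by
  unfold matProd
  congr 1
  refine List.map_congr_left fun i hi => h (i + 1) (by omega) ?_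
  simpa [Nat.succ_le_iff] using hi

lemma measurable_matProd_apply {α : Type*} [MeasurableSpace α]
    {B : α → ℕ → Matrix (Fin d) (Fin d) ℂ} (hB : ∀ m i j, Measurable fun a => B a m i j)
    (n : ℕ) (i j : Fin d) : Measurable fun a => matProd (B a) n i j := by
  induction n generalizing j with
  | zero => simp only [matProd, List.range_zero, List.map_nil, List.prod_nil]; fun_prop
  | succ n ih =>
    simp only [matProd_succ, Matrix.mul_apply]
    exact Finset.measurable_sum _ fun l _ => (ih l).mul (hB _ _ _)

lemma matEntrySumNorm_nonneg (M : Matrix (Fin d) (Fin d) ℂ) : 0 ≤ matEntrySumNorm M := by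
  unfold matEntrySumNorm
  positivity

lemma matEntrySumNorm_eq_zero_iff {M : Matrix (Fin d) (Fin d) ℂ} :
    matEntrySumNorm M = 0 ↔ M = 0 := by
  simp only [matEntrySumNorm, ← Matrix.ext_iff, Matrix.zero_apply]
  rw [Finset.sum_eq_zero_iff_of_nonneg fun i _ => by positivity]
  simp [Finset.sum_eq_zero_iff_of_nonneg]

lemma matEntrySumNorm_pos {M : Matrix (Fin d) (Fin d) ℂ} (hM : M ≠ 0) : 0 < matEntrySumNorm M :=
  (matEntrySumNorm_nonneg M).lt_of_ne (Ne.symm (mt matEntrySumNorm_eq_zero_iff.1 hM))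

lemma matEntrySumNorm_smul {𝕜 : Type*} [NormedField 𝕜] [NormedSpace 𝕜 ℂ] (c : 𝕜)
    (M : Matrix (Fin d) (Fin d) ℂ) : matEntrySumNorm (c • M) = ‖c‖ * matEntrySumNorm M := by
  simp [matEntrySumNorm, norm_smul, Finset.mul_sum]

lemma continuous_matEntrySumNorm : Continuous (matEntrySumNorm (d := d)) := by
  unfold matEntrySumNorm
  fun_prop

noncomputable def matNormalize (M : Matrix (Fin d) (Fin d) ℂ) : Matrix (Fin d) (Fin d) ℂ :=
  (matEntrySumNorm M)⁻¹ • M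

lemma matEntrySumNorm_matNormalize {M : Matrix (Fin d) (Fin d) ℂ} (hM : M ≠ 0) :
    matEntrySumNorm (matNormalize M) = 1 := by
  rw [matNormalize, matEntrySumNorm_smul, norm_inv, Real.norm_eq_abs,
    abs_of_nonneg (matEntrySumNorm_nonneg M)]
  exact inv_mul_cancel₀ (mt matEntrySumNorm_eq_zero_iff.1 hM)

lemma matNormalize_smul_of_norm_eq_one {c : ℂ} (hc : ‖c‖ = 1) (M : Matrix (Fin d) (Fin d) ℂ) :
    matNormalize (c • M) = c • matNormalize M := by
  rw [matNormalize, matNormalize, matEntrySumNorm_smul, hc, one_mul, smul_comm]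

lemma matNormalize_smul_of_pos {r : ℝ} (hr : 0 < r) (M : Matrix (Fin d) (Fin d) ℂ) :
    matNormalize (r • M) = matNormalize M := by
  rw [matNormalize, matNormalize, matEntrySumNorm_smul, Real.norm_of_nonneg hr.le, smul_smul]
  congr 1
  field_simp

lemma matNormalize_matNormalize_mul {X : Matrix (Fin d) (Fin d) ℂ} (hX : X ≠ 0)
    (M : Matrix (Fin d) (Fin d) ℂ) : matNormalize (matNormalize X * M) = matNormalize (X * M) := by
  rw [show matNormalize X * M = (matEntrySumNorm X)⁻¹ • (X * M) from Matrix.smul_mul _ X M]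
  exact matNormalize_smul_of_pos (inv_pos.2 (matEntrySumNorm_pos hX)) _

lemma continuousAt_matNormalize {M : Matrix (Fin d) (Fin d) ℂ} (hM : M ≠ 0) :
    ContinuousAt matNormalize M :=
  ((continuous_matEntrySumNorm.continuousAt).inv₀ (mt matEntrySumNorm_eq_zero_iff.1 hM)).smul
    continuousAt_id

lemma matNormalize_mul_eq_of_tendsto {A : ℕ → Matrix (Fin d) (Fin d) ℂ}
    {Q C : Matrix (Fin d) (Fin d) ℂ} (hP : ∀ n, matProd A n ≠ 0)
    (hQ : Tendsto (fun n => matNormalize (matProd A n)) atTop (𝓝 Q))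
    (hC : MapClusterPt C atTop A) (hQC : Q * C ≠ 0) : matNormalize (Q * C) = Q := by
  have : FirstCountableTopology (Matrix (Fin d) (Fin d) ℂ) :=
    inferInstanceAs (FirstCountableTopology (Fin d → Fin d → ℂ))
  obtain ⟨ψ, hψ, hAψ⟩ := hC.tendsto_subseq
  have hprev : Tendsto (fun k => matNormalize (matProd A (ψ k - 1))) atTop (𝓝 Q) :=
    hQ.comp ((tendsto_sub_atTop_nat 1).comp hψ.tendsto_atTop)
  have hstep : Tendsto (fun k => matNormalize (matNormalize (matProd A (ψ k - 1)) * A (ψ k)))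
      atTop (𝓝 (matNormalize (Q * C))) :=
    (continuousAt_matNormalize hQC).tendsto.comp (hprev.mul hAψ)
  refine tendsto_nhds_unique (hstep.congr' ?_) (hQ.comp hψ.tendsto_atTop)
  filter_upwards [eventually_ge_atTop 1] with k hk
  have hψk : ψ k = ψ k - 1 + 1 := by have : k ≤ ψ k := hψ.le_apply; omega
  rw [matNormalize_matNormalize_mul (hP _), Function.comp_apply, hψk, matProd_succ,
    Nat.add_sub_cancel]

lemma not_tendsto_matNormalize_matProd {A : ℕ → Matrix (Fin d) (Fin d) ℂ}
    (hP : ∀ n, matProd A n ≠ 0) {c : ℂ} (hc : ‖c‖ = 1) (hc1 : c ≠ 1)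
    (hC : MapClusterPt (c • 1) atTop A) :
    ¬ ∃ Q, Tendsto (fun n => matNormalize (matProd A n)) atTop (𝓝 Q) := by
  rintro ⟨Q, hQ⟩
  have hQ1 : matEntrySumNorm Q = 1 :=
    tendsto_nhds_unique (continuous_matEntrySumNorm.continuousAt.tendsto.comp hQ)
      (by simp [Function.comp_def, matEntrySumNorm_matNormalize (hP _)])
  have hQ0 : Q ≠ 0 := by rintro rfl; simp [matEntrySumNorm] at hQ1
  have hQc : Q * c • 1 = c • Q := by rw [Matrix.mul_smul, Matrix.mul_one]
  have hfix := matNormalize_mul_eq_of_tendsto hP hQ hC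
    (by rw [hQc]; exact smul_ne_zero (by rintro rfl; simp at hc) hQ0)
  rw [hQc, matNormalize_smul_of_norm_eq_one hc, matNormalize, hQ1, inv_one, one_smul] at hfix
  have : (c - 1) • Q = 0 := by rw [sub_smul, one_smul, hfix, sub_self]
  exact hQ0 ((smul_eq_zero.1 this).resolve_left (sub_ne_zero.2 hc1))

def ofEntries (x : ℕ × Fin d × Fin d → ℂ) : ℕ → Matrix (Fin d) (Fin d) ℂ :=
  fun m => Matrix.of fun i j => x (m, i, j)

lemma matProd_ofEntries_update (x : ℕ × Fin d × Fin d → ℂ) (n : ℕ) (k j : Fin d) (z : ℂ) :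
    matProd (ofEntries (Function.update x (n + 1, k, j) z)) n = matProd (ofEntries x) n :=
  matProd_congr fun m _ hm => by
    ext i l
    simp [ofEntries, show m ≠ n + 1 by omega]

lemma matProd_succ_ofEntries_apply (x : ℕ × Fin d × Fin d → ℂ) (n : ℕ) (r k j : Fin d) :
    matProd (ofEntries x) (n + 1) r j =
      matProd (ofEntries x) n r k * x (n + 1, k, j) +
        matProd (ofEntries (Function.update x (n + 1, k, j) 0)) (n + 1) r j := by
  simp only [matProd_succ, matProd_ofEntries_update, Matrix.mul_apply]
  rw [← Finset.add_sum_erase _ _ (Finset.mem_univ k),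
    ← Finset.add_sum_erase _ _ (Finset.mem_univ k)]
  simp only [ofEntries, Matrix.of_apply, Function.update_self, mul_zero, zero_add]
  congr 1
  refine Finset.sum_congr rfl fun l hl => ?_
  rw [Function.update_of_ne (by simpa using Finset.ne_of_mem_erase hl)]

section ClusterPoint

attribute [local instance] Matrix.normedAddCommGroup

lemma Matrix.mapClusterPt_of_frequently_mem_ball {u : ℕ → Matrix (Fin d) (Fin d) ℂ}
    {C : Matrix (Fin d) (Fin d) ℂ}
    (h : ∀ k : ℕ, ∃ᶠ m in atTop, ∀ i j, u m i j ∈ Metric.ball (C i j) (1 / ((k : ℝ) + 1))) :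
    MapClusterPt C atTop u := by
  refine Metric.nhds_basis_ball_inv_nat_succ.mapClusterPt_iff_frequently.2 fun k _ => ?_
  refine (h k).mono fun m hm => ?_
  rw [Metric.mem_ball, dist_eq_norm, Matrix.norm_lt_iff (by positivity)]
  simpa [dist_eq_norm] using hm

end ClusterPoint

end Matrices

namespace ProbabilityTheory

variable {Ω ι : Type*} {mΩ : MeasurableSpace Ω} {μ : Measure Ω}

lemma iIndepFun.indepFun_update [DecidableEq ι] {β : Type*} [mβ : MeasurableSpace β]
    {f : ι → Ω → β} (h : iIndepFun f μ) (hf : ∀ i, Measurable (f i)) (i : ι) (b : β) :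
    IndepFun (f i) (fun ω => Function.update (fun j => f j ω) i b) μ := by
  have hsplit := indep_iSup_of_disjoint (fun j => (hf j).comap_le)
    ((iIndepFun_iff_iIndep _ _ _).1 h) (S := {i}) (T := {i}ᶜ) disjoint_compl_right
  have hupdate : Measurable[⨆ j ∈ ({i}ᶜ : Set ι), MeasurableSpace.comap (f j) mβ]
      fun ω => Function.update (fun j => f j ω) i b := by
    refine @measurable_pi_lambda _ _ _ (⨆ j ∈ ({i}ᶜ : Set ι), MeasurableSpace.comap (f j) mβ) _ _
      fun j => ?_
    rcases eq_or_ne j i with rfl | hj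
    · simp only [Function.update_self]
      exact measurable_const
    · simp only [Function.update_of_ne hj]
      exact (comap_measurable (f j)).mono (le_iSup₂_of_le j hj le_rfl) le_rfl
  exact (IndepFun_iff_Indep _ _ _).2
    (indep_of_indep_of_le hsplit (le_iSup₂_of_le i rfl le_rfl) hupdate.comap_le)

lemma IndepFun.measure_setOf_eq_comp_eq_zero [IsFiniteMeasure μ] {α γ : Type*} [MeasurableSpace α]
    [MeasurableEq α] [MeasurableSpace γ] {X : Ω → α} {Y : Ω → γ} (h : IndepFun X Y μ)
    (hX : Measurable X) (hY : Measurable Y) {g : γ → α} (hg : Measurable g)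
    (hatom : ∀ a, μ.map X {a} = 0) : μ {ω | X ω = g (Y ω)} = 0 := by
  have hS : MeasurableSet {q : α × γ | q.1 = g q.2} :=
    measurableSet_eq_fun measurable_fst (hg.comp measurable_snd)
  rw [← Set.preimage_ofPred_eq (f := fun ω => (X ω, Y ω)) (p := fun q => q.1 = g q.2),
    ← Measure.map_apply (hX.prodMk hY) hS,
    (indepFun_iff_map_prod_eq_prod_map_map hX.aemeasurable hY.aemeasurable).1 h,
    Measure.prod_apply_symm hS]
  simp [Set.preimage, hatom]

lemma iIndepFun.measure_biInter_iInter_preimage {κ β : Type*} [Fintype κ] [MeasurableSpace β]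
    {f : ι × κ → Ω → β} (h : iIndepFun f μ) {s : κ → Set β} (hs : ∀ k, MeasurableSet (s k))
    (S : Finset ι) :
    μ (⋂ i ∈ S, ⋂ k, f (i, k) ⁻¹' s k) = ∏ i ∈ S, ∏ k, μ (f (i, k) ⁻¹' s k) := by
  classical
  have hset : ⋂ i ∈ S, ⋂ k, f (i, k) ⁻¹' s k = ⋂ t ∈ S ×ˢ Finset.univ, f t ⁻¹' s t.2 := by
    ext ω
    simp only [Set.mem_iInter, Set.mem_preimage, Finset.mem_product, Finset.mem_univ, and_true,
      Prod.forall]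
    exact ⟨fun h i k hi => h i hi k, fun h i hi k => h i k hi⟩
  rw [hset, h.measure_inter_preimage_eq_mul _ fun t _ => hs t.2, Finset.prod_product]

lemma iIndepFun.iIndepSet_iInter_preimage {κ β : Type*} [Fintype κ] [MeasurableSpace β]
    {f : ι × κ → Ω → β} (h : iIndepFun f μ) (hf : ∀ t, Measurable (f t)) {s : κ → Set β}
    (hs : ∀ k, MeasurableSet (s k)) : iIndepSet (fun i => ⋂ k, f (i, k) ⁻¹' s k) μ := by
  have hmeas : ∀ i, MeasurableSet (⋂ k, f (i, k) ⁻¹' s k) :=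
    fun i => MeasurableSet.iInter fun k => hf _ (hs k)
  refine (iIndepSet_iff_meas_biInter hmeas).2 fun S => ?_
  rw [h.measure_biInter_iInter_preimage hs]
  refine Finset.prod_congr rfl fun i _ => ?_
  simpa using (h.measure_biInter_iInter_preimage hs {i}).symm

lemma ae_frequently_mem_of_iIndepSet [IsProbabilityMeasure μ] {s : ℕ → Set Ω}
    (hs : ∀ n, MeasurableSet (s n)) (h : iIndepSet s μ) {c : ENNReal} (hc : c ≠ 0)
    (hμ : ∀ n, μ (s n) = c) : ∀ᵐ ω ∂μ, ∃ᶠ n in atTop, ω ∈ s n := by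
  have hlimsup := measure_limsup_eq_one hs h
    (by simp only [hμ]; exact ENNReal.tsum_const_eq_top_of_ne_zero hc)
  have hae := (mem_ae_iff_prob_eq_one (MeasurableSet.measurableSet_limsup hs)).2 hlimsup
  filter_upwards [hae] with ω hω
  exact mem_limsup_iff_frequently_mem.1 hω

end ProbabilityTheory

section RandomMatrices

variable {d : ℕ} {Ω : Type*} {mΩ : MeasurableSpace Ω} {μ : Measure Ω}
  {A : Ω → ℕ → Matrix (Fin d) (Fin d) ℂ}

lemma ae_matProd_succ_ne_zero [IsProbabilityMeasure μ]
    (hindep : iIndepFun (fun (t : ℕ × Fin d × Fin d) ω => A ω t.1 t.2.1 t.2.2) μ)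
    (hA : ∀ t : ℕ × Fin d × Fin d, Measurable fun ω => A ω t.1 t.2.1 t.2.2)
    (hatom : ∀ (t : ℕ × Fin d × Fin d) (z : ℂ), μ.map (fun ω => A ω t.1 t.2.1 t.2.2) {z} = 0)
    (n : ℕ) : ∀ᵐ ω ∂μ, matProd (A ω) n ≠ 0 → matProd (A ω) (n + 1) ≠ 0 := by
  classical
  let X := fun (t : ℕ × Fin d × Fin d) ω => A ω t.1 t.2.1 t.2.2
  -- the value of `(A_{n+1}) k k` that makes `P_{n+1} r k` vanish
  let root (r k : Fin d) (y : ℕ × Fin d × Fin d → ℂ) : ℂ :=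
    -matProd (ofEntries y) (n + 1) r k / matProd (ofEntries y) n r k
  have hnull : ∀ r k, μ {ω | X (n + 1, k, k) ω =
      root r k (Function.update (fun t => X t ω) (n + 1, k, k) 0)} = 0 := by
    intro r k
    have hroot : Measurable (root r k) := by
      have hent : ∀ m i j, Measurable fun y : ℕ × Fin d × Fin d → ℂ => ofEntries y m i j :=
        fun m i j => measurable_pi_apply (m, i, j)
      exact ((measurable_matProd_apply hent _ r k).neg).div (measurable_matProd_apply hent _ r k)
    exact (hindep.indepFun_update hA _ 0).measure_setOf_eq_comp_eq_zero (hA _)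
      (measurable_pi_lambda _ fun t => by by_cases ht : t = (n + 1, k, k) <;>
        simp [ht, hA t]) hroot (hatom _)
  refine ae_iff.2 (measure_mono_null ?_ (measure_iUnion_null fun r =>
    measure_iUnion_null fun k => hnull r k))
  intro ω hω
  obtain ⟨hPn, hPn1⟩ : matProd (A ω) n ≠ 0 ∧ matProd (A ω) (n + 1) = 0 := by simpa using hω
  obtain ⟨r, k, hrk⟩ : ∃ r k, matProd (A ω) n r k ≠ 0 := by
    by_contra! h
    exact hPn (Matrix.ext h)
  refine Set.mem_iUnion₂.2 ⟨r, k, ?_⟩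
  have hsplit := matProd_succ_ofEntries_apply (fun t => X t ω) n r k k
  change matProd (A ω) (n + 1) r k = matProd (A ω) n r k * A ω (n + 1) k k + _ at hsplit
  rw [hPn1, Matrix.zero_apply] at hsplit
  show X (n + 1, k, k) ω = root r k _
  simp only [root, matProd_ofEntries_update]
  change A ω (n + 1) k k = -_ / matProd (A ω) n r k
  field_simp
  linear_combination -hsplit

lemma ae_forall_matProd_ne_zero [NeZero d] [IsProbabilityMeasure μ]
    (hindep : iIndepFun (fun (t : ℕ × Fin d × Fin d) ω => A ω t.1 t.2.1 t.2.2) μ)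
    (hA : ∀ t : ℕ × Fin d × Fin d, Measurable fun ω => A ω t.1 t.2.1 t.2.2)
    (hatom : ∀ (t : ℕ × Fin d × Fin d) (z : ℂ), μ.map (fun ω => A ω t.1 t.2.1 t.2.2) {z} = 0) :
    ∀ᵐ ω ∂μ, ∀ n, matProd (A ω) n ≠ 0 := by
  filter_upwards [ae_all_iff.2 (ae_matProd_succ_ne_zero hindep hA hatom)] with ω hω n
  induction n with
  | zero => exact one_ne_zero
  | succ n ih => exact hω n ih

lemma ae_frequently_entries_mem_ball [IsProbabilityMeasure μ]
    (hindep : iIndepFun (fun (t : ℕ × Fin d × Fin d) ω => A ω t.1 t.2.1 t.2.2) μ)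
    (hA : ∀ t : ℕ × Fin d × Fin d, Measurable fun ω => A ω t.1 t.2.1 t.2.2)
    (p : Measure ℂ) (hlaw : ∀ t : ℕ × Fin d × Fin d, μ.map (fun ω => A ω t.1 t.2.1 t.2.2) = p)
    (hsupp : ∀ U : Set ℂ, IsOpen U → U.Nonempty → 0 < p U)
    (C : Matrix (Fin d) (Fin d) ℂ) {ε : ℝ} (hε : 0 < ε) :
    ∀ᵐ ω ∂μ, ∃ᶠ m in atTop, ∀ i j, A ω m i j ∈ Metric.ball (C i j) ε := by
  have hball : ∀ q : Fin d × Fin d, MeasurableSet (Metric.ball (C q.1 q.2) ε) :=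
    fun _ => measurableSet_ball
  have hprob : ∀ m, μ (⋂ q : Fin d × Fin d,
      (fun ω => A ω m q.1 q.2) ⁻¹' Metric.ball (C q.1 q.2) ε) =
      ∏ q : Fin d × Fin d, p (Metric.ball (C q.1 q.2) ε) := by
    intro m
    have := hindep.measure_biInter_iInter_preimage hball {m}
    simp only [Finset.mem_singleton, Set.iInter_iInter_eq_left, Finset.prod_singleton] at this
    rw [this]
    refine Finset.prod_congr rfl fun q _ => ?_
    rw [← hlaw (m, q), Measure.map_apply (hA _) (hball q)]
  have hpos : ∏ q : Fin d × Fin d, p (Metric.ball (C q.1 q.2) ε) ≠ 0 :=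
    Finset.prod_ne_zero_iff.2 fun q _ =>
      (hsupp _ Metric.isOpen_ball (Metric.nonempty_ball.2 hε)).ne'
  filter_upwards [ae_frequently_mem_of_iIndepSet
    (fun m => MeasurableSet.iInter fun q => hA (m, q) (hball q))
    (hindep.iIndepSet_iInter_preimage hA hball) hpos hprob] with ω hω
  exact hω.mono fun m hm i j => Set.mem_iInter.1 hm (i, j)

lemma ae_mapClusterPt [IsProbabilityMeasure μ]
    (hindep : iIndepFun (fun (t : ℕ × Fin d × Fin d) ω => A ω t.1 t.2.1 t.2.2) μ)
    (hA : ∀ t : ℕ × Fin d × Fin d, Measurable fun ω => A ω t.1 t.2.1 t.2.2)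
    (p : Measure ℂ) (hlaw : ∀ t : ℕ × Fin d × Fin d, μ.map (fun ω => A ω t.1 t.2.1 t.2.2) = p)
    (hsupp : ∀ U : Set ℂ, IsOpen U → U.Nonempty → 0 < p U) (C : Matrix (Fin d) (Fin d) ℂ) :
    ∀ᵐ ω ∂μ, MapClusterPt C atTop (A ω) := by
  filter_upwards [ae_all_iff.2 fun k : ℕ => ae_frequently_entries_mem_ball hindep hA p hlaw hsupp C
    (Nat.one_div_pos_of_nat (n := k))] with ω hω
  exact Matrix.mapClusterPt_of_frequently_mem_ball hω

end RandomMatrices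

theorem normalized_product_diverges_almost_surely_general {d : ℕ} (hd : 1 ≤ d)
    (p : Measure ℂ)
    (hatom : ∀ z : ℂ, p {z} = 0)
    (hsupp : ∀ U : Set ℂ, IsOpen U → U.Nonempty → 0 < p U)
    (Pstar : Measure (ℕ → Matrix (Fin d) (Fin d) ℂ)) [IsProbabilityMeasure Pstar]
    (hindep : iIndepFun
      (fun (t : ℕ × Fin d × Fin d) (A : ℕ → Matrix (Fin d) (Fin d) ℂ) => A t.1 t.2.1 t.2.2) Pstar)
    (hlaw : ∀ t : ℕ × Fin d × Fin d,
      Pstar.map (fun A => A t.1 t.2.1 t.2.2) = p) :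
    ∀ᵐ A ∂Pstar, (∀ n, matProd A n ≠ 0) ∧
      ¬ ∃ Q : Matrix (Fin d) (Fin d) ℂ,
        Tendsto (fun n => (matEntrySumNorm (matProd A n))⁻¹ • matProd A n)
          atTop (nhds Q) := by
  have : NeZero d := ⟨by omega⟩
  have hentry : ∀ t : ℕ × Fin d × Fin d,
      Measurable fun A : ℕ → Matrix (Fin d) (Fin d) ℂ => A t.1 t.2.1 t.2.2 := fun t => by
    have hev : Continuous fun M : Matrix (Fin d) (Fin d) ℂ => M t.2.1 t.2.2 :=
      continuous_apply_apply _ _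
    exact hev.measurable.comp (measurable_pi_apply t.1)
  filter_upwards [ae_forall_matProd_ne_zero (A := id) hindep hentry
      (fun t z => (hlaw t).symm ▸ hatom z),
    ae_mapClusterPt (A := id) hindep hentry p hlaw hsupp (Complex.I • 1)] with A hP hC
  exact ⟨hP, not_tendsto_matNormalize_matProd hP Complex.norm_I (by simp [Complex.ext_iff]) hC⟩

/-- Corollary 3.3: if `P*` makes all the entries of all the matrices
`A_1, A_2, …` i.i.d. with common law `p`, a non-atomic Borel probability measure on `ℂ`
with full topological support, then `P*`-almost surely `P_n ≠ 0` for every `n` and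
`P_n/‖P_n‖` diverges. -/
theorem normalized_product_diverges_almost_surely {d : ℕ} (hd : 1 ≤ d)
    (p : Measure ℂ) [IsProbabilityMeasure p]
    (hatom : ∀ z : ℂ, p {z} = 0)
    (hsupp : ∀ U : Set ℂ, IsOpen U → U.Nonempty → 0 < p U)
    (Pstar : Measure (ℕ → Matrix (Fin d) (Fin d) ℂ)) [IsProbabilityMeasure Pstar]
    (hindep : iIndepFun
      (fun (t : ℕ × Fin d × Fin d) (A : ℕ → Matrix (Fin d) (Fin d) ℂ) => A t.1 t.2.1 t.2.2) Pstar)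
    (hlaw : ∀ t : ℕ × Fin d × Fin d,
      Pstar.map (fun A => A t.1 t.2.1 t.2.2) = p) :
    ∀ᵐ A ∂Pstar, (∀ n, matProd A n ≠ 0) ∧
      ¬ ∃ Q : Matrix (Fin d) (Fin d) ℂ,
        Tendsto (fun n => (matEntrySumNorm (matProd A n))⁻¹ • matProd A n)
          atTop (nhds Q) :=
  normalized_product_diverges_almost_surely_general hd p hatom hsupp Pstar hindep hlaw
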